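/- arXiv:1507.01482 — 5 statements merged into one kernel-verified Lean document; each statement's English description precedes it below -/
import Mathlib

section
/- Fix a prime p and let F be the algebraic closure of the field with p elements. Then for every δ > 0 and every natural number N there exist finite sets P ⊆ F × F of points and L ⊆ F × F of lines with |P| ≥ N and |L| ≥ N such that for all subsets P₀ ⊆ P and L₀ ⊆ L with |P₀| ≥ δ·|P| and |L₀| ≥ δ·|L|, there exist (x,y) ∈ P₀ and (a,b) ∈ L₀ with y = a·x + b. In particular, the conclusion of the strong Erdős–Hajnal statement for point–line incidence-free pairs fails over F. -/
/-!
Take `P = L = 𝔽_q²` for a finite subfield `𝔽_q` of `F`. Each point of `𝔽_q²` lies on exactly `q`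
lines of `𝔽_q²` and two distinct points on at most one, so the number `n(l)` of points of `P₀` on
`l` satisfies `∑ n(l) = q |P₀|` and `∑ n(l)² ≤ q |P₀| + |P₀|²`. If there are no incidences, `n`
vanishes on `L₀`, and Cauchy–Schwarz over the remaining lines gives
`(q |P₀|)² ≤ (q² - |L₀|) (q |P₀| + |P₀|²)`, which forces `δ² q ≤ 1` once `|P₀|, |L₀| ≥ δ q²`.
It remains to take `q > δ⁻²`.
-/

open Finset

section Incidence

variable {F : Type*} [Field F] [DecidableEq F]

abbrev IsIncident (z l : F × F) : Prop := z.2 = l.1 * z.1 + l.2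

theorem card_lines_through_point {S : Finset F}
    (hS : ∀ a ∈ S, ∀ x ∈ S, ∀ y ∈ S, y - a * x ∈ S) {z : F × F} (hz : z ∈ S ×ˢ S) :
    #{l ∈ S ×ˢ S | IsIncident z l} = #S := by
  obtain ⟨hz₁, hz₂⟩ := mem_product.1 hz
  refine card_nbij' Prod.fst (fun a => (a, z.2 - a * z.1)) ?_ ?_ ?_ (fun _ _ => rfl)
  · intro l hl
    exact (mem_product.1 (mem_filter.1 hl).1).1
  · intro a ha
    exact mem_filter.2 ⟨mem_product.2 ⟨ha, hS a ha z.1 hz₁ z.2 hz₂⟩, by ring⟩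
  · intro l hl
    exact Prod.ext rfl (by linear_combination (mem_filter.1 hl).2)

theorem card_lines_through_two_points_le_one (T : Finset (F × F)) {z w : F × F} (hzw : z ≠ w) :
    #{l ∈ T | IsIncident z l ∧ IsIncident w l} ≤ 1 := by
  refine card_le_one.2 fun l hl l' hl' => ?_
  obtain ⟨-, e₁, e₂⟩ := mem_filter.1 hl
  obtain ⟨-, e₃, e₄⟩ := mem_filter.1 hl'
  have hd : (l.1 - l'.1) * (z.1 - w.1) = 0 := by linear_combination e₃ - e₁ + e₂ - e₄
  rcases mul_eq_zero.1 hd with h | h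
  · exact Prod.ext (sub_eq_zero.1 h) (by linear_combination e₃ - e₁ - z.1 * h)
  · exact absurd (Prod.ext (sub_eq_zero.1 h) (by linear_combination e₁ - e₂ + l.1 * h)) hzw

variable {S : Finset F} (hS : ∀ a ∈ S, ∀ x ∈ S, ∀ y ∈ S, y - a * x ∈ S)
  {P₀ : Finset (F × F)} (hP₀ : P₀ ⊆ S ×ˢ S)
include hS hP₀

theorem sum_card_points_on_line :
    ∑ l ∈ S ×ˢ S, #{z ∈ P₀ | IsIncident z l} = #S * #P₀ := by
  calc ∑ l ∈ S ×ˢ S, #{z ∈ P₀ | IsIncident z l}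
      = ∑ z ∈ P₀, #{l ∈ S ×ˢ S | IsIncident z l} :=
        (sum_card_bipartiteAbove_eq_sum_card_bipartiteBelow _).symm
    _ = ∑ _z ∈ P₀, #S := sum_congr rfl fun z hz => card_lines_through_point hS (hP₀ hz)
    _ = #S * #P₀ := by rw [sum_const, smul_eq_mul, mul_comm]

theorem sum_sq_card_points_on_line_le :
    ∑ l ∈ S ×ˢ S, #{z ∈ P₀ | IsIncident z l} ^ 2 ≤ #S * #P₀ + #P₀ ^ 2 := by
  have hpairs : ∀ z ∈ P₀, ∀ w ∈ P₀,
      #{l ∈ S ×ˢ S | IsIncident z l ∧ IsIncident w l} ≤ (if z = w then #S else 0) + 1 := by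
    intro z hz w _
    by_cases hzw : z = w
    · subst hzw
      simp only [and_self, if_true, card_lines_through_point hS (hP₀ hz)]
      omega
    · simpa [hzw] using card_lines_through_two_points_le_one (S ×ˢ S) hzw
  calc ∑ l ∈ S ×ˢ S, #{z ∈ P₀ | IsIncident z l} ^ 2
      = ∑ l ∈ S ×ˢ S, #{zw ∈ P₀ ×ˢ P₀ | IsIncident zw.1 l ∧ IsIncident zw.2 l} := by
        refine sum_congr rfl fun l _ => ?_
        rw [sq, ← card_product, ← filter_product]
    _ = ∑ zw ∈ P₀ ×ˢ P₀, #{l ∈ S ×ˢ S | IsIncident zw.1 l ∧ IsIncident zw.2 l} :=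
        (sum_card_bipartiteAbove_eq_sum_card_bipartiteBelow _).symm
    _ ≤ ∑ z ∈ P₀, ∑ w ∈ P₀, ((if z = w then #S else 0) + 1) := by
        rw [sum_product]
        exact sum_le_sum fun z hz => sum_le_sum fun w hw => hpairs z hz w hw
    _ = ∑ _z ∈ P₀, (#S + #P₀) :=
        sum_congr rfl fun z hz => by simp [sum_add_distrib, sum_ite_eq, hz]
    _ = #S * #P₀ + #P₀ ^ 2 := by rw [sum_const, smul_eq_mul]; ring

variable {L₀ : Finset (F × F)} (hL₀ : L₀ ⊆ S ×ˢ S)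
  (hno : ∀ z ∈ P₀, ∀ l ∈ L₀, ¬ IsIncident z l)
include hL₀ hno

theorem sq_card_mul_card_le_of_forall_not_isIncident :
    (#S * #P₀) ^ 2 ≤ (#S ^ 2 - #L₀) * (#S * #P₀ + #P₀ ^ 2) := by
  have hoff : ∑ l ∈ S ×ˢ S \ L₀, #{z ∈ P₀ | IsIncident z l} = #S * #P₀ := by
    rw [← sum_card_points_on_line hS hP₀]
    refine sum_subset sdiff_subset fun l hl hl' => card_eq_zero.2 <| filter_eq_empty_iff.2
      fun z hz => hno z hz l (by simpa [hl] using hl')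
  calc (#S * #P₀) ^ 2 = (∑ l ∈ S ×ˢ S \ L₀, #{z ∈ P₀ | IsIncident z l}) ^ 2 := by rw [hoff]
    _ ≤ #(S ×ˢ S \ L₀) * ∑ l ∈ S ×ˢ S \ L₀, #{z ∈ P₀ | IsIncident z l} ^ 2 :=
        sq_sum_le_card_mul_sum_sq
    _ ≤ (#S ^ 2 - #L₀) * (#S * #P₀ + #P₀ ^ 2) := by
        rw [card_sdiff_of_subset hL₀, card_product, ← sq]
        exact Nat.mul_le_mul_left _ <| (sum_le_sum_of_subset sdiff_subset).trans
          (sum_sq_card_points_on_line_le hS hP₀)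

theorem sq_mul_card_le_one_of_forall_not_isIncident {δ : ℝ} (hδ : 0 < δ)
    (hPδ : δ * (#(S ×ˢ S) : ℝ) ≤ #P₀) (hLδ : δ * (#(S ×ˢ S) : ℝ) ≤ #L₀) :
    δ ^ 2 * (#S : ℝ) ≤ 1 := by
  have hL : #L₀ ≤ #S ^ 2 := by simpa [sq] using card_le_card hL₀
  have hkey := (Nat.cast_le (α := ℝ)).2 <|
    sq_card_mul_card_le_of_forall_not_isIncident hS hP₀ hL₀ hno
  push_cast [Nat.cast_sub hL] at hkey
  rw [card_product, Nat.cast_mul, ← sq] at hPδ hLδ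
  rcases (Nat.cast_nonneg #S : (0 : ℝ) ≤ #S).eq_or_lt with hQ | hQ
  · simp [← hQ]
  generalize (#S : ℝ) = Q, (#P₀ : ℝ) = m, (#L₀ : ℝ) = ℓ at *
  have hm : 0 < m := lt_of_lt_of_le (by positivity) hPδ
  have hmQ : m ≤ (1 - δ) * (Q + m) := by
    have hcoef : Q ^ 2 - ℓ ≤ (1 - δ) * Q ^ 2 := by linarith
    refine le_of_mul_le_mul_left ?_ (by positivity : 0 < Q ^ 2 * m)
    nlinarith [mul_le_mul_of_nonneg_right hcoef (by positivity : 0 ≤ Q * m + m ^ 2)]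
  refine le_of_mul_le_mul_right ?_ hQ
  nlinarith [mul_le_mul_of_nonneg_left hPδ hδ.le]

end Incidence

theorem exists_finset_card_eq_pow_forall_sub_mul_mem (p : ℕ) [Fact p.Prime] {F : Type*} [Field F]
    [Algebra (ZMod p) F] [IsAlgClosed F] {n : ℕ} (hn : n ≠ 0) :
    ∃ S : Finset F, #S = p ^ n ∧ ∀ a ∈ S, ∀ x ∈ S, ∀ y ∈ S, y - a * x ∈ S := by
  let φ : GaloisField p n →ₐ[ZMod p] F := IsAlgClosed.lift
  have : Fintype (GaloisField p n) := Fintype.ofFinite _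
  refine ⟨univ.map ⟨φ, φ.injective⟩, ?_, ?_⟩
  · rw [card_map, card_univ, Fintype.card_eq_nat_card, GaloisField.card p n hn]
  · simp only [mem_map, mem_univ, true_and, Function.Embedding.coeFn_mk, forall_exists_index,
      forall_apply_eq_imp_iff]
    exact fun a x y => ⟨y - a * x, by simp⟩

/-- Failure of the strong Erdős–Hajnal property for point–line non-incidence
over the algebraic closure of `𝔽_p`. -/
theorem stmt_1 (p : ℕ) [Fact p.Prime] :
    ∀ δ : ℝ, 0 < δ → ∀ N : ℕ,
      ∃ P L : Finset (AlgebraicClosure (ZMod p) × AlgebraicClosure (ZMod p)),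
        N ≤ P.card ∧ N ≤ L.card ∧
        ∀ P₀ ⊆ P, ∀ L₀ ⊆ L,
          δ * (P.card : ℝ) ≤ (P₀.card : ℝ) → δ * (L.card : ℝ) ≤ (L₀.card : ℝ) →
          ∃ q ∈ P₀, ∃ l ∈ L₀, q.2 = l.1 * q.1 + l.2 := by
  classical
  intro δ hδ N
  have hδ2 : 0 < δ ^ 2 := by positivity
  obtain ⟨n, hn⟩ := pow_unbounded_of_one_lt (N + (δ ^ 2)⁻¹ + 1)
    (show (1 : ℝ) < p by exact_mod_cast (Fact.out : p.Prime).one_lt)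
  have hn0 : n ≠ 0 := by
    rintro rfl
    norm_num at hn
    linarith [inv_pos.2 hδ2]
  obtain ⟨S, hS, hsub⟩ :=
    exists_finset_card_eq_pow_forall_sub_mul_mem p (F := AlgebraicClosure (ZMod p)) hn0
  rw [← Nat.cast_pow, ← hS] at hn
  have hNS : (N : ℝ) < #S := by linarith [inv_pos.2 hδ2]
  have hδS : 1 < δ ^ 2 * #S := (inv_lt_iff_one_lt_mul₀' hδ2).1 (by linarith)
  have hN : N ≤ #(S ×ˢ S) := by
    rw [card_product]
    have hNS' : N < #S := by exact_mod_cast hNS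
    exact hNS'.le.trans (Nat.le_mul_of_pos_left _ (by omega))
  refine ⟨S ×ˢ S, S ×ˢ S, hN, hN, fun P₀ hP₀ L₀ hL₀ hPδ hLδ => ?_⟩
  by_contra! hno
  exact hδS.not_ge (sq_mul_card_le_one_of_forall_not_isIncident hsub hP₀ hL₀ hno hδ hPδ hLδ)
end

section
/- Let F be a finite field with |F| = q and let δ be a real number with 0 < δ ≤ 1 and δ²·q > 1 − δ. Then for all subsets P ⊆ F × F and L ⊆ F × F with |P| ≥ δ·q² and |L| ≥ δ·q², there exist a point (x,y) ∈ P and a line (a,b) ∈ L with y = a·x + b. -/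
/-!
If no point of `P` lies on a line of `L`, the `|L| q` incidences between `L` and all points
are carried by the complement of `P`, of size at most `(1 - δ) q²`. Since two distinct lines
meet in at most one point, the second moment of the number of lines of `L` through a point is
at most `|L| q + |L|²`, and Cauchy–Schwarz gives `(|L| q)² ≤ (1 - δ) q² (|L| q + |L|²)`, which
forces `δ |L| ≤ (1 - δ) q` and hence, by `|L| ≥ δ q²`, `δ² q ≤ 1 - δ`.
-/

open Finset

section Incidence

variable {α ι : Type*} [DecidableEq α] (line : ι → Finset α) (L : Finset ι) (S : Finset α)

theorem sum_card_filter_mem_eq_sum_card (hS : ∀ l ∈ L, line l ⊆ S) :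
    ∑ p ∈ S, #{l ∈ L | p ∈ line l} = ∑ l ∈ L, #(line l) := by
  refine (sum_card_bipartiteAbove_eq_sum_card_bipartiteBelow (fun p l => p ∈ line l)).trans ?_
  refine sum_congr rfl fun l hl => ?_
  rw [bipartiteBelow, filter_mem_eq_inter, inter_eq_right.mpr (hS l hl)]

theorem sum_sq_card_filter_mem_le
    (hL : ∀ l ∈ L, ∀ l' ∈ L, l ≠ l' → #(line l ∩ line l') ≤ 1) :
    ∑ p ∈ S, #{l ∈ L | p ∈ line l} ^ 2 ≤ ∑ l ∈ L, #(line l) + #L ^ 2 := by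
  have hsq : ∀ p, #{l ∈ L | p ∈ line l} ^ 2 = #{m ∈ L ×ˢ L | p ∈ line m.1 ∧ p ∈ line m.2} := by
    intro p
    rw [sq, ← card_product, ← filter_product]
  classical
  have hpair : ∀ m ∈ L ×ˢ L, #{p ∈ S | p ∈ line m.1 ∧ p ∈ line m.2} ≤
      (if m.1 = m.2 then #(line m.1) else 0) + 1 := by
    rintro ⟨l, l'⟩ hm
    rw [mem_product] at hm
    calc #{p ∈ S | p ∈ line l ∧ p ∈ line l'} ≤ #(line l ∩ line l') := by
          refine card_le_card fun p hp => ?_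
          simp only [mem_filter] at hp
          exact mem_inter.mpr hp.2
      _ ≤ (if l = l' then #(line l) else 0) + 1 := by
          split_ifs with h
          · subst h; simp
          · simpa using hL l hm.1 l' hm.2 h
  calc ∑ p ∈ S, #{l ∈ L | p ∈ line l} ^ 2
      = ∑ m ∈ L ×ˢ L, #{p ∈ S | p ∈ line m.1 ∧ p ∈ line m.2} := by
        simp_rw [hsq]
        exact sum_card_bipartiteAbove_eq_sum_card_bipartiteBelow
          (fun p (m : ι × ι) => p ∈ line m.1 ∧ p ∈ line m.2)
    _ ≤ ∑ m ∈ L ×ˢ L, ((if m.1 = m.2 then #(line m.1) else 0) + 1) := sum_le_sum hpair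
    _ = ∑ l ∈ L, #(line l) + #L ^ 2 := by
        rw [sum_add_distrib, sum_product, sum_const, card_product, smul_eq_mul, mul_one, sq]
        congr 1
        exact sum_congr rfl fun l hl => by rw [sum_ite_eq, if_pos hl]

theorem sq_sum_card_le_card_mul (hS : ∀ l ∈ L, line l ⊆ S)
    (hL : ∀ l ∈ L, ∀ l' ∈ L, l ≠ l' → #(line l ∩ line l') ≤ 1) :
    (∑ l ∈ L, #(line l)) ^ 2 ≤ #S * (∑ l ∈ L, #(line l) + #L ^ 2) := by
  calc (∑ l ∈ L, #(line l)) ^ 2 = (∑ p ∈ S, #{l ∈ L | p ∈ line l}) ^ 2 := by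
        rw [sum_card_filter_mem_eq_sum_card line L S hS]
    _ ≤ #S * ∑ p ∈ S, #{l ∈ L | p ∈ line l} ^ 2 := sq_sum_le_card_mul_sum_sq ..
    _ ≤ #S * (∑ l ∈ L, #(line l) + #L ^ 2) :=
        Nat.mul_le_mul_left _ (sum_sq_card_filter_mem_le line L S hL)

end Incidence

section AffineLine

variable {F : Type*} [Field F] [Fintype F] [DecidableEq F]

def affineLine (l : F × F) : Finset (F × F) := {p | p.2 = l.1 * p.1 + l.2}

@[simp]
theorem mem_affineLine {l p : F × F} : p ∈ affineLine l ↔ p.2 = l.1 * p.1 + l.2 := by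
  simp [affineLine]

theorem card_affineLine (l : F × F) : #(affineLine l) = Fintype.card F := by
  have : affineLine l = univ.image fun x => (x, l.1 * x + l.2) := by
    ext p
    simp only [mem_affineLine, mem_image, mem_univ, true_and]
    exact ⟨fun h => ⟨p.1, Prod.ext rfl h.symm⟩, fun ⟨x, hx⟩ => by rw [← hx]⟩
  rw [this, card_image_of_injective _ fun x y h => congrArg Prod.fst h, card_univ]

theorem card_affineLine_inter_le_one {l l' : F × F} (h : l ≠ l') :
    #(affineLine l ∩ affineLine l') ≤ 1 := by
  refine card_le_one.mpr fun p hp p' hp' => ?_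
  simp only [mem_inter, mem_affineLine] at hp hp'
  have hslope : l.1 ≠ l'.1 := by
    rintro ha
    refine h (Prod.ext ha ?_)
    have := hp.1.symm.trans hp.2
    rw [ha] at this
    exact add_left_cancel this
  have hx : p.1 = p'.1 := by
    refine mul_left_cancel₀ (sub_ne_zero.mpr hslope) ?_
    linear_combination hp.2 - hp.1 - hp'.2 + hp'.1
  exact Prod.ext hx (by rw [hp.1, hp'.1, hx])

end AffineLine

theorem sq_mul_le_one_sub_of_sq_le {q A B δ : ℝ} (hq : 0 < q) (hδ : 0 < δ)
    (hA : δ * q ^ 2 ≤ A) (hB : δ * q ^ 2 ≤ B)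
    (h : (B * q) ^ 2 ≤ (q ^ 2 - A) * (B * q + B ^ 2)) :
    δ ^ 2 * q ≤ 1 - δ := by
  have hB0 : 0 < B := (by positivity : 0 < δ * q ^ 2).trans_le hB
  have h1 : B * q ^ 2 ≤ (1 - δ) * q ^ 2 * (q + B) :=
    calc B * q ^ 2 ≤ (q ^ 2 - A) * (q + B) :=
          le_of_mul_le_mul_left (by linear_combination h) hB0
      _ ≤ (1 - δ) * q ^ 2 * (q + B) := by gcongr; linarith
  have h2 : δ * B ≤ (1 - δ) * q :=
    le_of_mul_le_mul_left (a := q ^ 2) (by linear_combination h1) (by positivity)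
  have h3 : q * (δ ^ 2 * q) ≤ q * (1 - δ) := by
    linear_combination h2 + δ * hB
  exact le_of_mul_le_mul_left h3 hq

theorem stmt_2_general (F : Type*) [Field F] [Fintype F] (δ : ℝ)
    (hδ0 : 0 < δ)
    (hq : 1 - δ < δ ^ 2 * (Fintype.card F : ℝ)) :
    ∀ P L : Finset (F × F),
      δ * (Fintype.card F : ℝ) ^ 2 ≤ (P.card : ℝ) →
      δ * (Fintype.card F : ℝ) ^ 2 ≤ (L.card : ℝ) →
      ∃ q ∈ P, ∃ l ∈ L, q.2 = l.1 * q.1 + l.2 := by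
  classical
  intro P L hP hL
  by_contra! hPL
  have hcompl : ∀ l ∈ L, affineLine l ⊆ Pᶜ := fun l hl p hp =>
    mem_compl.mpr fun hpP => hPL p hpP l hl (mem_affineLine.mp hp)
  have hcs := sq_sum_card_le_card_mul affineLine L Pᶜ hcompl
    fun l _ l' _ h => card_affineLine_inter_le_one h
  simp only [card_affineLine, sum_const, smul_eq_mul] at hcs
  have hq0 : (0 : ℝ) < Fintype.card F := by exact_mod_cast Fintype.card_pos
  have hPc : (#Pᶜ : ℝ) = (Fintype.card F : ℝ) ^ 2 - #P := by
    rw [eq_sub_iff_add_eq', sq]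
    exact_mod_cast Fintype.card_prod F F ▸ card_add_card_compl P
  refine hq.not_ge (sq_mul_le_one_sub_of_sq_le hq0 hδ0 hP hL ?_)
  rw [← hPc]
  exact_mod_cast hcs

/-- In a finite field `F` with `|F| = q`, if `0 < δ ≤ 1` and `δ² q > 1 - δ`, then any
point set and line set of size at least `δ q²` contain an incident point–line pair. -/
theorem stmt_2 (F : Type*) [Field F] [Fintype F] (δ : ℝ)
    (hδ0 : 0 < δ) (hδ1 : δ ≤ 1)
    (hq : 1 - δ < δ ^ 2 * (Fintype.card F : ℝ)) :
    ∀ P L : Finset (F × F),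
      δ * (Fintype.card F : ℝ) ^ 2 ≤ (P.card : ℝ) →
      δ * (Fintype.card F : ℝ) ^ 2 ≤ (L.card : ℝ) →
      ∃ q ∈ P, ∃ l ∈ L, q.2 = l.1 * q.1 + l.2 :=
  stmt_2_general F δ hδ0 hq
end

section
/- Let n, m, k be natural numbers with m ≥ 1, and let R be a relation on {0,…,n−1} × {0,…,m−1} such that for every i < n the number of indices j with j + 1 < m and R(i,j) not equivalent to R(i,j+1) is at most k (i.e. each row alternates at most k times). Then there exist a subset A ⊆ {0,…,n−1} with |A| ≥ n / (2(k+1)) and a set of consecutive indices B ⊆ {0,…,m−1} with |B| ≥ ⌊m/(k+1)⌋ such that the pair (A,B) is R-homogeneous: either R(i,j) holds for all i ∈ A, j ∈ B, or R(i,j) fails for all i ∈ A, j ∈ B. -/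
/-!
Split the first `(k + 1) * ⌊m/(k+1)⌋` columns into `k + 1` consecutive blocks of length
`⌊m/(k+1)⌋`. A row with at most `k` alternations misses some block entirely, so it is constant
on that block. Labelling each row by such a block and by its constant value there gives at most
`2(k+1)` labels, and by pigeonhole some label is carried by at least `n/(2(k+1))` rows.
-/

def alternationSet (P : ℕ → Prop) (m : ℕ) : Set ℕ :=
  {j | j + 1 < m ∧ ¬(P j ↔ P (j + 1))}

lemma alternationSet_finite (P : ℕ → Prop) (m : ℕ) : (alternationSet P m).Finite :=
  (Set.finite_Iio m).subset fun _ hj => Nat.lt_of_succ_lt hj.1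

lemma iff_of_forall_iff_succ {P : ℕ → Prop} {a b : ℕ}
    (h : ∀ j, a ≤ j → j + 1 < b → (P j ↔ P (j + 1))) :
    ∀ j ∈ Finset.Ico a b, (P j ↔ P a) := by
  intro j hj
  obtain ⟨haj, hjb⟩ := Finset.mem_Ico.mp hj
  clear hj
  induction j, haj using Nat.le_induction with
  | base => rfl
  | succ j haj ih => exact (h j haj hjb).symm.trans (ih (by omega))

lemma exists_lt_forall_div_ne {S : Set ℕ} (hS : S.Finite) {k : ℕ} (hk : S.ncard ≤ k)
    (t : ℕ) :
    ∃ l < k + 1, ∀ j ∈ S, j / t ≠ l := by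
  by_contra! hcover
  have hsub : ↑(Finset.range (k + 1)) ⊆ (· / t) '' S :=
    fun l hl => hcover l (Finset.mem_range.mp hl)
  have hcard := Set.ncard_le_ncard hsub (hS.image _)
  rw [Set.ncard_coe_finset, Finset.card_range] at hcard
  have := Set.ncard_image_le (f := (· / t)) hS
  omega

lemma lt_of_lt_block_end {k l m t j : ℕ} (hl : l < k + 1) (hkt : (k + 1) * t ≤ m)
    (hj : j < l * t + t) : j < m :=
  calc j < (l + 1) * t := by rw [Nat.succ_mul]; exact hj
    _ ≤ (k + 1) * t := Nat.mul_le_mul_right t hl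
    _ ≤ m := hkt

lemma exists_block_iff_of_ncard_alternationSet_le (P : ℕ → Prop) {m k t : ℕ}
    (hkt : (k + 1) * t ≤ m) (hP : (alternationSet P m).ncard ≤ k) :
    ∃ l < k + 1, ∀ j ∈ Finset.Ico (l * t) (l * t + t), (P j ↔ P (l * t)) := by
  obtain ⟨l, hl, hmiss⟩ := exists_lt_forall_div_ne (alternationSet_finite P m) hP t
  refine ⟨l, hl, iff_of_forall_iff_succ fun j hlj hjt => ?_⟩
  have hdiv : j / t = l := Nat.div_eq_of_lt_le hlj (by rw [Nat.succ_mul]; omega)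
  by_contra hne
  exact hmiss j ⟨lt_of_lt_block_end hl hkt hjt, hne⟩ hdiv

lemma homogeneous_of_forall_iff_eq_true {R : ℕ → ℕ → Prop} {A B : Finset ℕ} {v : Bool}
    (h : ∀ i ∈ A, ∀ j ∈ B, (R i j ↔ v = true)) :
    (∀ i ∈ A, ∀ j ∈ B, R i j) ∨ (∀ i ∈ A, ∀ j ∈ B, ¬ R i j) := by
  cases v
  · exact Or.inr fun i hi j hj hR => by simpa using (h i hi j hj).mp hR
  · exact Or.inl fun i hi j hj => (h i hi j hj).mpr rfl

theorem stmt_4_general (n m k : ℕ) (R : ℕ → ℕ → Prop)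
    (halt : ∀ i < n, {j | j + 1 < m ∧ ¬(R i j ↔ R i (j + 1))}.ncard ≤ k) :
    ∃ A : Finset ℕ, A ⊆ Finset.range n ∧ (n : ℝ) / (2 * (k + 1)) ≤ (A.card : ℝ) ∧
      ∃ a b : ℕ, Finset.Ico a b ⊆ Finset.range m ∧ m / (k + 1) ≤ (Finset.Ico a b).card ∧
        ((∀ i ∈ A, ∀ j ∈ Finset.Ico a b, R i j) ∨
         (∀ i ∈ A, ∀ j ∈ Finset.Ico a b, ¬ R i j)) := by
  classical
  set t := m / (k + 1)
  have hkt : (k + 1) * t ≤ m := Nat.mul_div_le m (k + 1)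
  choose! g hg hconst using fun i hi =>
    exists_block_iff_of_ncard_alternationSet_le (R i) hkt (halt i hi)
  obtain ⟨⟨l, v⟩, hlv, hfiber⟩ :=
    Finset.exists_le_card_fiber_of_nsmul_le_card_of_maps_to
      (f := fun i => (g i, decide (R i (g i * t))))
      (t := Finset.range (k + 1) ×ˢ Finset.univ) (b := (n : ℝ) / (2 * (k + 1)))
      (fun i hi => Finset.mem_product.mpr
        ⟨Finset.mem_range.mpr (hg i (Finset.mem_range.mp hi)), Finset.mem_univ _⟩)
      ⟨(0, true), by simp⟩
      (by rw [nsmul_eq_mul]; field_simp; simp [mul_comm])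
  have hl : l < k + 1 := by simpa using hlv
  refine ⟨_, Finset.filter_subset _ _, hfiber, l * t, l * t + t, fun j hj => ?_, by simp, ?_⟩
  · exact Finset.mem_range.mpr (lt_of_lt_block_end hl hkt (Finset.mem_Ico.mp hj).2)
  · refine homogeneous_of_forall_iff_eq_true (v := v) fun i hi j hj => ?_
    simp only [Finset.mem_filter, Finset.mem_range, Prod.mk.injEq] at hi
    obtain ⟨hin, rfl, hv⟩ := hi
    rw [hconst i hin j hj, ← hv, decide_eq_true_iff]

/-- If each row of a relation on `{0,…,n-1} × {0,…,m-1}` alternates at most `k` times, then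
there are a subset `A` of the rows with `|A| ≥ n/(2(k+1))` and an interval `B` of columns with
`|B| ≥ ⌊m/(k+1)⌋` such that `(A, B)` is `R`-homogeneous. -/
theorem stmt_4 (n m k : ℕ) (hm : 1 ≤ m) (R : ℕ → ℕ → Prop)
    (halt : ∀ i < n, {j | j + 1 < m ∧ ¬(R i j ↔ R i (j + 1))}.ncard ≤ k) :
    ∃ A : Finset ℕ, A ⊆ Finset.range n ∧ (n : ℝ) / (2 * (k + 1)) ≤ (A.card : ℝ) ∧
      ∃ a b : ℕ, Finset.Ico a b ⊆ Finset.range m ∧ m / (k + 1) ≤ (Finset.Ico a b).card ∧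
        ((∀ i ∈ A, ∀ j ∈ Finset.Ico a b, R i j) ∨
         (∀ i ∈ A, ∀ j ∈ Finset.Ico a b, ¬ R i j)) :=
  stmt_4_general n m k R halt
end

section
/- Let n, m, s be natural numbers, let λ_n and λ_m denote Lebesgue measure on ℝ^n and ℝ^m respectively, and let R ⊆ ℝ^n × ℝ^m × ℝ^s be a semialgebraic set. Then there is a constant δ > 0 such that for every parameter c ∈ ℝ^s there exist Lebesgue-measurable sets A ⊆ [0,1]^n and B ⊆ [0,1]^m with λ_n(A) ≥ δ and λ_m(B) ≥ δ such that the pair (A, B) is homogeneous for the relation R_c = {(x,y) : (x,y,c) ∈ R}: either A × B ⊆ R_c or (A × B) ∩ R_c = ∅. -/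
/-- Finite Boolean combinations of a family `S` of subsets of `α`. -/
inductive BoolComb {α : Type*} (S : Set (Set α)) : Set α → Prop
  | basic (s : Set α) (hs : s ∈ S) : BoolComb S s
  | compl (s : Set α) (h : BoolComb S s) : BoolComb S sᶜ
  | inter (s t : Set α) (hs : BoolComb S s) (ht : BoolComb S t) : BoolComb S (s ∩ t)
  | union (s t : Set α) (hs : BoolComb S s) (ht : BoolComb S t) : BoolComb S (s ∪ t)

/-- A subset of `ℝ^n × ℝ^m × ℝ^s` is semialgebraic if it is a finite Boolean combination of
zero-sets and positivity-sets of real polynomials in `n + m + s` variables. -/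
def IsSemialgebraic3 (n m s : ℕ) (R : Set ((Fin n → ℝ) × (Fin m → ℝ) × (Fin s → ℝ))) : Prop :=
  BoolComb
    {S | ∃ p : MvPolynomial (Fin n ⊕ Fin m ⊕ Fin s) ℝ,
      S = {z | MvPolynomial.eval (Sum.elim z.1 (Sum.elim z.2.1 z.2.2)) p = 0} ∨
      S = {z | 0 < MvPolynomial.eval (Sum.elim z.1 (Sum.elim z.2.1 z.2.2)) p}} R

open MeasureTheory

/-! Membership in `R` depends only on the signs of finitely many polynomials `p(x, y, c)`. For
fixed `c` these are polynomials in `(x, y)` whose exponents lie in a fixed finite set `T`, so after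
normalising their coefficient vectors they range over a compact family. A nonzero polynomial does
not vanish identically on the open unit cube, hence is nonzero on some closed sup-norm ball inside
it, and by compactness the radius of that ball can be chosen independently of `c`. On a ball
where each `p(·, ·, c)` is either identically zero or nowhere zero, connectedness freezes all the
signs, so the ball, which is a product `A × B`, is homogeneous. -/

open MvPolynomial Metric Topology

theorem IsCompact.exists_pos_forall_exists_closedBall_subset {X E : Type*} [TopologicalSpace X]
    [PseudoMetricSpace E] [ProperSpace E] {K : Set X} (hK : IsCompact K) {W : Set (X × E)}
    (hW : IsOpen W) (hKW : ∀ p ∈ K, (Prod.mk p ⁻¹' W).Nonempty) :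
    ∃ r > 0, ∀ p ∈ K, ∃ x, closedBall x r ⊆ Prod.mk p ⁻¹' W := by
  set O : ℕ → Set X := fun j => {p | ∃ x, closedBall x (1 / (j + 1)) ⊆ Prod.mk p ⁻¹' W}
  have hO_open : ∀ j, IsOpen (O j) := by
    refine fun j => isOpen_iff_mem_nhds.mpr fun p ⟨x, hx⟩ => ?_
    have hnhds : ∀ᶠ p' in 𝓝 p, ∀ y ∈ closedBall x (1 / (j + 1)), (p', y) ∈ W :=
      (isCompact_closedBall x _).eventually_forall_of_forall_eventually
        fun y hy => hW.mem_nhds (x := (p, y)) (hx hy)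
    exact Filter.mem_of_superset hnhds fun p' hp' => ⟨x, hp'⟩
  have hO_mono : Monotone O := fun j j' hjj' p ⟨x, hx⟩ =>
    ⟨x, (closedBall_subset_closedBall (Nat.one_div_le_one_div hjj')).trans hx⟩
  have hKO : K ⊆ ⋃ j, O j := by
    intro p hp
    obtain ⟨x, hx⟩ := hKW p hp
    obtain ⟨ε, hε, hball⟩ := Metric.isOpen_iff.mp (hW.preimage (Continuous.prodMk_right p)) x hx
    obtain ⟨j, hj⟩ := exists_nat_one_div_lt hε
    exact Set.mem_iUnion.mpr ⟨j, x, (closedBall_subset_ball hj).trans hball⟩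
  obtain ⟨j, hj⟩ := hK.elim_directed_cover O hO_open hKO hO_mono.directed_le
  exact ⟨1 / (j + 1), by positivity, hj⟩

theorem IsPreconnected.sign_eq {E : Type*} [TopologicalSpace E] {S : Set E}
    (hS : IsPreconnected S) {f : E → ℝ} (hf : ContinuousOn f S) (hf0 : ∀ x ∈ S, f x ≠ 0)
    {x y : E} (hx : x ∈ S) (hy : y ∈ S) : SignType.sign (f x) = SignType.sign (f y) := by
  have neg_of_neg : ∀ a ∈ S, ∀ b ∈ S, f a < 0 → f b < 0 := by
    intro a ha b hb hfa
    by_contra! hfb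
    obtain ⟨z, hz, hz0⟩ := hS.intermediate_value ha hb hf ⟨hfa.le, hfb⟩
    exact hf0 z hz hz0
  rcases (hf0 x hx).lt_or_gt with hfx | hfx
  · rw [sign_neg hfx, sign_neg (neg_of_neg x hx y hy hfx)]
  · have hfy : 0 < f y :=
      (hf0 y hy).lt_or_gt.resolve_left fun h => hfx.not_gt (neg_of_neg y hy x hx h)
    rw [sign_pos hfx, sign_pos hfy]

theorem Sum.elim_mem_closedBall_iff {α β E : Type*} [Fintype α] [Fintype β] [PseudoMetricSpace E]
    {x : α ⊕ β → E} {r : ℝ} (hr : 0 ≤ r) (a : α → E) (b : β → E) :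
    Sum.elim a b ∈ closedBall x r ↔
      a ∈ closedBall (x ∘ Sum.inl) r ∧ b ∈ closedBall (x ∘ Sum.inr) r := by
  simp only [closedBall_pi _ hr, Set.mem_pi, Set.mem_univ, true_implies, Sum.forall,
    Sum.elim_inl, Sum.elim_inr, Function.comp_apply]

theorem BoolComb.exists_finset_determining {α κ β : Type*} {S : Set (Set α)} (g : κ → α → β)
    (hS : ∀ t ∈ S, ∃ j, ∀ z w, g j z = g j w → (z ∈ t ↔ w ∈ t)) {t : Set α}
    (ht : BoolComb S t) : ∃ J : Finset κ, ∀ z w, (∀ j ∈ J, g j z = g j w) → (z ∈ t ↔ w ∈ t) := by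
  classical
  induction ht with
  | basic t ht =>
    obtain ⟨j, hj⟩ := hS t ht
    exact ⟨{j}, fun z w h => hj z w (h j (Finset.mem_singleton_self j))⟩
  | compl t _ ih =>
    obtain ⟨J, hJ⟩ := ih
    exact ⟨J, fun z w h => not_congr (hJ z w h)⟩
  | inter t u _ _ iht ihu =>
    obtain ⟨J, hJ⟩ := iht
    obtain ⟨J', hJ'⟩ := ihu
    exact ⟨J ∪ J', fun z w h => and_congr
      (hJ z w fun j hj => h j (Finset.mem_union_left _ hj))
      (hJ' z w fun j hj => h j (Finset.mem_union_right _ hj))⟩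
  | union t u _ _ iht ihu =>
    obtain ⟨J, hJ⟩ := iht
    obtain ⟨J', hJ'⟩ := ihu
    exact ⟨J ∪ J', fun z w h => or_congr
      (hJ z w fun j hj => h j (Finset.mem_union_left _ hj))
      (hJ' z w fun j hj => h j (Finset.mem_union_right _ hj))⟩

namespace MvPolynomial

theorem exists_mem_pi_eval_ne_zero {R σ : Type*} [CommRing R] [IsDomain R] {p : MvPolynomial σ R}
    (hp : p ≠ 0) {s : σ → Set R} (hs : ∀ i, (s i).Infinite) :
    ∃ x ∈ Set.univ.pi s, eval x p ≠ 0 := by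
  by_contra! h
  exact hp (funext_set s hs fun x hx => by rw [h x hx, map_zero])

section OfCoeffs

variable {R ι : Type*} [CommSemiring R]

noncomputable def ofCoeffs (T : Finset (ι →₀ ℕ)) : (T → R) →ₗ[R] MvPolynomial ι R :=
  ∑ β : T, monomial (β : ι →₀ ℕ) ∘ₗ LinearMap.proj β

theorem ofCoeffs_apply (T : Finset (ι →₀ ℕ)) (u : T → R) :
    ofCoeffs T u = ∑ β : T, monomial (β : ι →₀ ℕ) (u β) := by
  simp only [ofCoeffs, LinearMap.coe_sum, LinearMap.coe_comp, LinearMap.coe_proj,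
    Finset.sum_apply, Function.comp_apply, Function.eval]

theorem coeff_ofCoeffs (T : Finset (ι →₀ ℕ)) (u : T → R) (β : T) :
    coeff (β : ι →₀ ℕ) (ofCoeffs T u) = u β := by
  classical
  simp only [ofCoeffs_apply, coeff_sum, coeff_monomial, Subtype.coe_inj, Finset.sum_ite_eq',
    Finset.mem_univ, if_true]

theorem ofCoeffs_ne_zero {T : Finset (ι →₀ ℕ)} {u : T → R} (hu : u ≠ 0) : ofCoeffs T u ≠ 0 := by
  obtain ⟨β, hβ⟩ := Function.ne_iff.mp hu
  exact fun h => hβ (by rw [← coeff_ofCoeffs T u β, h, coeff_zero, Pi.zero_apply])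

theorem ofCoeffs_coeff {T : Finset (ι →₀ ℕ)} {q : MvPolynomial ι R} (hq : q.support ⊆ T) :
    ofCoeffs T (fun β => coeff (β : ι →₀ ℕ) q) = q := by
  conv_rhs => rw [q.as_sum, Finset.sum_subset hq fun β _ hβ => by
    rw [notMem_support_iff.mp hβ, monomial_zero]]
  exact (ofCoeffs_apply T _).trans (Finset.sum_coe_sort T fun β => monomial β (coeff β q))

theorem continuous_eval_ofCoeffs [TopologicalSpace R] [IsTopologicalSemiring R]
    (T : Finset (ι →₀ ℕ)) :
    Continuous fun z : (T → R) × (ι → R) => eval z.2 (ofCoeffs T z.1) := by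
  simp only [ofCoeffs_apply, map_sum, eval_monomial, Finsupp.prod]
  fun_prop

end OfCoeffs

section UniformBall

variable {ι κ : Type*} [Fintype ι] [Fintype κ]

theorem exists_pos_forall_exists_closedBall_eval_ofCoeffs_ne_zero
    (T : Finset (ι →₀ ℕ)) :
    ∃ r > 0, ∀ u : κ → T → ℝ, (∀ i, ‖u i‖ = 1) →
      ∃ x : ι → ℝ, ∀ y ∈ closedBall x r,
        y ∈ Set.univ.pi (fun _ => Set.Ioo 0 1) ∧ ∀ i, eval y (ofCoeffs T (u i)) ≠ 0 := by
  set cube : Set (ι → ℝ) := Set.univ.pi fun _ => Set.Ioo 0 1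
  set W := {z : (κ → T → ℝ) × (ι → ℝ) | z.2 ∈ cube ∧ ∏ i, eval z.2 (ofCoeffs T (z.1 i)) ≠ 0}
  have hW : IsOpen W :=
    ((isOpen_set_pi Set.finite_univ fun _ _ => isOpen_Ioo).preimage continuous_snd).inter
      (isOpen_ne_fun (continuous_finsetProd _ fun i _ => (continuous_eval_ofCoeffs T).comp
        (f := fun z : (κ → T → ℝ) × (ι → ℝ) => (z.1 i, z.2)) (by fun_prop)) continuous_const)
  have hKW : ∀ u ∈ Set.univ.pi fun _ => sphere 0 1, (Prod.mk u ⁻¹' W).Nonempty := by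
    intro u hu
    have hprod : ∏ i, ofCoeffs T (u i) ≠ 0 := Finset.prod_ne_zero_iff.mpr fun i _ =>
      ofCoeffs_ne_zero (ne_zero_of_mem_unit_sphere ⟨u i, hu i trivial⟩)
    obtain ⟨y, hy, hy0⟩ := exists_mem_pi_eval_ne_zero hprod fun _ => Set.Ioo_infinite zero_lt_one
    exact ⟨y, hy, by rwa [map_prod] at hy0⟩
  obtain ⟨r, hr, hball⟩ :=
    (isCompact_univ_pi fun _ => isCompact_sphere 0 1).exists_pos_forall_exists_closedBall_subset
      hW hKW
  refine ⟨r, hr, fun u hu => ?_⟩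
  obtain ⟨x, hx⟩ := hball u fun i _ => mem_sphere_zero_iff_norm.mpr (hu i)
  exact ⟨x, fun y hy =>
    ⟨(hx hy).1, fun i => Finset.prod_ne_zero_iff.mp (hx hy).2 i (Finset.mem_univ i)⟩⟩

theorem exists_pos_forall_exists_closedBall_eval_ne_zero (T : Finset (ι →₀ ℕ)) :
    ∃ r > 0, ∀ q : κ → MvPolynomial ι ℝ, (∀ i, (q i).support ⊆ T) →
      ∃ x : ι → ℝ, closedBall x r ⊆ Set.Icc 0 1 ∧
        ∀ i, q i ≠ 0 → ∀ y ∈ closedBall x r, eval y (q i) ≠ 0 := by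
  classical
  -- `0 ∈ T'` makes the constant vector `1` a unit vector of `T' → ℝ`
  set T' := insert 0 T
  have : Nonempty T' := ⟨⟨0, Finset.mem_insert_self 0 T⟩⟩
  obtain ⟨r, hr, hball⟩ :=
    exists_pos_forall_exists_closedBall_eval_ofCoeffs_ne_zero (κ := κ) T'
  refine ⟨r, hr, fun q hq => ?_⟩
  set v : κ → T' → ℝ := fun i β => coeff (β : ι →₀ ℕ) (q i)
  have hqv : ∀ i, ofCoeffs T' (v i) = q i := fun i =>
    ofCoeffs_coeff ((hq i).trans (Finset.subset_insert 0 T))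
  have hv : ∀ i, q i ≠ 0 → v i ≠ 0 := fun i hqi hvi => hqi (by rw [← hqv i, hvi, map_zero])
  set u : κ → T' → ℝ := fun i => if q i = 0 then 1 else ‖v i‖⁻¹ • v i
  have hu : ∀ i, ‖u i‖ = 1 := by
    intro i
    by_cases hqi : q i = 0
    · simp [u, hqi]
    · simp only [u, hqi, if_false]
      exact norm_smul_inv_norm (hv i hqi)
  have hu_eval : ∀ i, q i ≠ 0 → ∀ y, eval y (ofCoeffs T' (u i)) = ‖v i‖⁻¹ * eval y (q i) := by
    intro i hqi y
    simp only [u, hqi, if_false, map_smul, hqv, smul_eval]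
  obtain ⟨x, hx⟩ := hball u hu
  refine ⟨x, fun y hy => ?_, fun i hqi y hy => ?_⟩
  · exact ⟨fun k => ((hx y hy).1 k trivial).1.le, fun k => ((hx y hy).1 k trivial).2.le⟩
  · have hne := (hx y hy).2 i
    rw [hu_eval i hqi] at hne
    exact right_ne_zero_of_mul hne

end UniformBall

section CurryParams

variable {R : Type*} [CommSemiring R] {α β γ : Type*}

noncomputable def curryParams :
    MvPolynomial (α ⊕ β ⊕ γ) R →ₐ[R] MvPolynomial (α ⊕ β) (MvPolynomial γ R) :=
  (sumAlgEquiv R (α ⊕ β) γ).toAlgHom.comp (rename (Equiv.sumAssoc α β γ).symm)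

theorem eval_map_eval_curryParams (p : MvPolynomial (α ⊕ β ⊕ γ) R) (a : α → R) (b : β → R)
    (c : γ → R) :
    eval (Sum.elim a b) (map (eval c) (curryParams p)) = eval (Sum.elim a (Sum.elim b c)) p := by
  induction p using MvPolynomial.induction_on with
  | C r => simp [curryParams]
  | add p q hp hq => simp only [map_add, hp, hq]
  | mul_X p v hp => rcases v with i | j | k <;> simp_all [curryParams]

end CurryParams

end MvPolynomial

namespace IsSemialgebraic3

variable {n m s : ℕ} {R : Set ((Fin n → ℝ) × (Fin m → ℝ) × (Fin s → ℝ))}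

theorem exists_finset_sign_determined (hR : IsSemialgebraic3 n m s R) :
    ∃ J : Finset (MvPolynomial (Fin n ⊕ Fin m ⊕ Fin s) ℝ),
      ∀ z w : (Fin n → ℝ) × (Fin m → ℝ) × (Fin s → ℝ),
        (∀ p ∈ J, SignType.sign (eval (Sum.elim z.1 (Sum.elim z.2.1 z.2.2)) p) =
          SignType.sign (eval (Sum.elim w.1 (Sum.elim w.2.1 w.2.2)) p)) → (z ∈ R ↔ w ∈ R) := by
  refine BoolComb.exists_finset_determining
    (fun (p : MvPolynomial (Fin n ⊕ Fin m ⊕ Fin s) ℝ)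
      (z : (Fin n → ℝ) × (Fin m → ℝ) × (Fin s → ℝ)) =>
        SignType.sign (eval (Sum.elim z.1 (Sum.elim z.2.1 z.2.2)) p)) ?_ hR
  rintro t ⟨p, rfl | rfl⟩ <;> refine ⟨p, fun z w h => ?_⟩
  · rw [Set.mem_ofPred_eq, Set.mem_ofPred_eq, ← sign_eq_zero_iff, h, sign_eq_zero_iff]
  · rw [Set.mem_ofPred_eq, Set.mem_ofPred_eq, ← sign_eq_one_iff, h, sign_eq_one_iff]

theorem exists_pos_forall_exists_closedBall_mem_iff (hR : IsSemialgebraic3 n m s R) :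
    ∃ r > 0, ∀ c : Fin s → ℝ, ∃ (a₀ : Fin n → ℝ) (b₀ : Fin m → ℝ),
      closedBall a₀ r ⊆ Set.Icc 0 1 ∧ closedBall b₀ r ⊆ Set.Icc 0 1 ∧
      ∀ a ∈ closedBall a₀ r, ∀ b ∈ closedBall b₀ r, ((a, b, c) ∈ R ↔ (a₀, b₀, c) ∈ R) := by
  obtain ⟨J, hJ⟩ := hR.exists_finset_sign_determined
  obtain ⟨r, hr, hball⟩ := exists_pos_forall_exists_closedBall_eval_ne_zero (κ := J)
    (J.biUnion fun p => (curryParams p).support)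
  refine ⟨r, hr, fun c => ?_⟩
  obtain ⟨x, hx01, hx⟩ := hball (fun p => map (eval c) (curryParams (p : MvPolynomial _ ℝ)))
    fun p => (support_map_subset _ _).trans
      (Finset.subset_biUnion_of_mem (fun p => (curryParams p).support) p.2)
  have hAB : ∀ a ∈ closedBall (x ∘ Sum.inl) r, ∀ b ∈ closedBall (x ∘ Sum.inr) r,
      Sum.elim a b ∈ closedBall x r := fun a ha b hb =>
    (Sum.elim_mem_closedBall_iff hr.le a b).mpr ⟨ha, hb⟩
  have hA₀ : x ∘ Sum.inl ∈ closedBall (x ∘ Sum.inl) r := mem_closedBall_self hr.le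
  have hB₀ : x ∘ Sum.inr ∈ closedBall (x ∘ Sum.inr) r := mem_closedBall_self hr.le
  refine ⟨x ∘ Sum.inl, x ∘ Sum.inr, fun a ha => ?_, fun b hb => ?_, fun a ha b hb => ?_⟩
  · have h := hx01 (hAB a ha _ hB₀)
    exact ⟨fun i => h.1 (.inl i), fun i => h.2 (.inl i)⟩
  · have h := hx01 (hAB _ hA₀ b hb)
    exact ⟨fun j => h.1 (.inr j), fun j => h.2 (.inr j)⟩
  refine hJ _ _ fun p hp => ?_
  simp only [← eval_map_eval_curryParams]
  by_cases hp0 : map (eval c) (curryParams p) = 0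
  · simp only [hp0, map_zero]
  · refine (convex_closedBall x r).isPreconnected.sign_eq (continuous_eval _).continuousOn
      (hx ⟨p, hp⟩ hp0) (hAB a ha b hb) ?_
    simpa only [Sum.elim_comp_inl_inr] using hAB _ hA₀ _ hB₀

end IsSemialgebraic3

/-- Definable homogeneous pairs of positive Lebesgue measure in the unit cubes, for
semialgebraic relations, uniformly in the parameter `c`. -/
theorem stmt_8 (n m s : ℕ) (R : Set ((Fin n → ℝ) × (Fin m → ℝ) × (Fin s → ℝ)))
    (hR : IsSemialgebraic3 n m s R) :
    ∃ δ : ℝ, 0 < δ ∧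
      ∀ c : Fin s → ℝ,
        ∃ (A : Set (Fin n → ℝ)) (B : Set (Fin m → ℝ)),
          MeasurableSet A ∧ MeasurableSet B ∧
          A ⊆ Set.Icc (0 : Fin n → ℝ) 1 ∧ B ⊆ Set.Icc (0 : Fin m → ℝ) 1 ∧
          ENNReal.ofReal δ ≤ volume A ∧ ENNReal.ofReal δ ≤ volume B ∧
          ((∀ a ∈ A, ∀ b ∈ B, (a, b, c) ∈ R) ∨ (∀ a ∈ A, ∀ b ∈ B, (a, b, c) ∉ R)) := by
  obtain ⟨r, hr, hball⟩ := hR.exists_pos_forall_exists_closedBall_mem_iff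
  refine ⟨min ((2 * r) ^ n) ((2 * r) ^ m), by positivity, fun c => ?_⟩
  obtain ⟨a₀, b₀, hA, hB, hR_iff⟩ := hball c
  refine ⟨closedBall a₀ r, closedBall b₀ r, measurableSet_closedBall, measurableSet_closedBall,
    hA, hB, ?_, ?_, ?_⟩
  · rw [Real.volume_pi_closedBall _ hr.le, Fintype.card_fin]
    exact ENNReal.ofReal_le_ofReal (min_le_left _ _)
  · rw [Real.volume_pi_closedBall _ hr.le, Fintype.card_fin]
    exact ENNReal.ofReal_le_ofReal (min_le_right _ _)
  by_cases hc : (a₀, b₀, c) ∈ R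
  · exact .inl fun a ha b hb => (hR_iff a ha b hb).mpr hc
  · exact .inr fun a ha b hb => (hR_iff a ha b hb).not.mpr hc
end

section
/- Let n, m be natural numbers and let R ⊆ ℤ^n × ℤ^m be a relation which is a finite Boolean combination of sets of the following three forms (in the combined variables z = (z₁,…,z_{n+m})): {z : a₁z₁ + ⋯ + a_{n+m}z_{n+m} = a₀}, {z : a₁z₁ + ⋯ + a_{n+m}z_{n+m} > a₀}, and {z : a₁z₁ + ⋯ + a_{n+m}z_{n+m} ≡ a₀ (mod d)}, where a₀, a₁, …, a_{n+m} ∈ ℤ and d ≥ 1. Then there is a constant δ > 0 such that for all finite sets A ⊆ ℤ^n and B ⊆ ℤ^m there exist A₀ ⊆ A and B₀ ⊆ B with |A₀| ≥ δ·|A|, |B₀| ≥ δ·|B|, and the pair (A₀, B₀) is R-homogeneous. -/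
open Finset

variable {α β ι : Type*}

def IsHomogeneous (R : Set (α × β)) (A : Finset α) (B : Finset β) : Prop :=
  (∀ a ∈ A, ∀ b ∈ B, (a, b) ∈ R) ∨ (∀ a ∈ A, ∀ b ∈ B, (a, b) ∉ R)

def HasStrongErdosHajnal (R : Set (α × β)) : Prop :=
  ∃ δ : ℝ, 0 < δ ∧
    ∀ (A : Finset α) (B : Finset β),
      ∃ A₀ ⊆ A, ∃ B₀ ⊆ B,
        δ * (A.card : ℝ) ≤ (A₀.card : ℝ) ∧ δ * (B.card : ℝ) ≤ (B₀.card : ℝ) ∧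
        IsHomogeneous R A₀ B₀

namespace IsHomogeneous

variable {R S : Set (α × β)} {A A₀ : Finset α} {B B₀ : Finset β}

theorem mono (h : IsHomogeneous R A B) (hA : A₀ ⊆ A) (hB : B₀ ⊆ B) :
    IsHomogeneous R A₀ B₀ :=
  h.imp (fun H a ha b hb => H a (hA ha) b (hB hb)) (fun H a ha b hb => H a (hA ha) b (hB hb))

theorem compl (h : IsHomogeneous R A B) : IsHomogeneous Rᶜ A B :=
  h.symm.imp (fun H a ha b hb => H a ha b hb) (fun H a ha b hb => not_not_intro (H a ha b hb))

theorem inter (hR : IsHomogeneous R A B) (hS : IsHomogeneous S A B) :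
    IsHomogeneous (R ∩ S) A B := by
  rcases hR with hR | hR
  · rcases hS with hS | hS
    · exact Or.inl fun a ha b hb => ⟨hR a ha b hb, hS a ha b hb⟩
    · exact Or.inr fun a ha b hb H => hS a ha b hb H.2
  · exact Or.inr fun a ha b hb H => hR a ha b hb H.1

theorem union (hR : IsHomogeneous R A B) (hS : IsHomogeneous S A B) :
    IsHomogeneous (R ∪ S) A B := by
  simpa only [Set.compl_inter, compl_compl] using (hR.compl.inter hS.compl).compl

end IsHomogeneous

namespace HasStrongErdosHajnal

variable {R S T : Set (α × β)}

theorem compl (h : HasStrongErdosHajnal R) : HasStrongErdosHajnal Rᶜ := by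
  obtain ⟨δ, hδ, h⟩ := h
  refine ⟨δ, hδ, fun A B => ?_⟩
  obtain ⟨A₀, hA₀, B₀, hB₀, hA, hB, hhom⟩ := h A B
  exact ⟨A₀, hA₀, B₀, hB₀, hA, hB, hhom.compl⟩

theorem of_nonempty {δ : ℝ} (hδ : 0 < δ) (hδ₁ : δ ≤ 1)
    (h : ∀ (A : Finset α) (B : Finset β), A.Nonempty → B.Nonempty →
      ∃ A₀ ⊆ A, ∃ B₀ ⊆ B, δ * #A ≤ #A₀ ∧ δ * #B ≤ #B₀ ∧ IsHomogeneous R A₀ B₀) :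
    HasStrongErdosHajnal R := by
  refine ⟨δ, hδ, fun A B => ?_⟩
  have hle (k : ℕ) : δ * k ≤ k := mul_le_of_le_one_left k.cast_nonneg hδ₁
  rcases A.eq_empty_or_nonempty with rfl | hA
  · exact ⟨∅, subset_rfl, B, subset_rfl, by simp, hle _, Or.inl (by simp)⟩
  rcases B.eq_empty_or_nonempty with rfl | hB
  · exact ⟨A, subset_rfl, ∅, subset_rfl, hle _, by simp, Or.inl (by simp)⟩
  exact h A B hA hB

theorem of_isHomogeneous_imp (hR : HasStrongErdosHajnal R) (hS : HasStrongErdosHajnal S)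
    (hT : ∀ (A : Finset α) (B : Finset β),
      IsHomogeneous R A B → IsHomogeneous S A B → IsHomogeneous T A B) :
    HasStrongErdosHajnal T := by
  obtain ⟨δ, hδ, hR⟩ := hR
  obtain ⟨ε, hε, hS⟩ := hS
  refine ⟨δ * ε, mul_pos hδ hε, fun A B => ?_⟩
  obtain ⟨A₁, hA₁, B₁, hB₁, hA₁card, hB₁card, hhomR⟩ := hR A B
  obtain ⟨A₀, hA₀, B₀, hB₀, hA₀card, hB₀card, hhomS⟩ := hS A₁ B₁
  have density {x y z : ℝ} (hxy : δ * x ≤ y) (hyz : ε * y ≤ z) : δ * ε * x ≤ z := by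
    nlinarith
  exact ⟨A₀, hA₀.trans hA₁, B₀, hB₀.trans hB₁, density hA₁card hA₀card,
    density hB₁card hB₀card, hT A₀ B₀ (hhomR.mono hA₀ hB₀) hhomS⟩

theorem inter (hR : HasStrongErdosHajnal R) (hS : HasStrongErdosHajnal S) :
    HasStrongErdosHajnal (R ∩ S) :=
  hR.of_isHomogeneous_imp hS fun _ _ => IsHomogeneous.inter

theorem union (hR : HasStrongErdosHajnal R) (hS : HasStrongErdosHajnal S) :
    HasStrongErdosHajnal (R ∪ S) :=
  hR.of_isHomogeneous_imp hS fun _ _ => IsHomogeneous.union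

end HasStrongErdosHajnal

theorem BoolComb.hasStrongErdosHajnal {𝒮 : Set (Set (α × β))}
    (h𝒮 : ∀ S ∈ 𝒮, HasStrongErdosHajnal S) {R : Set (α × β)} (hR : BoolComb 𝒮 R) :
    HasStrongErdosHajnal R := by
  induction hR with
  | basic S hS => exact h𝒮 S hS
  | compl _ _ ih => exact ih.compl
  | inter _ _ _ _ ihS ihT => exact ihS.inter ihT
  | union _ _ _ _ ihS ihT => exact ihS.union ihT

theorem Finset.exists_median [LinearOrder β] (A : Finset α) (f : α → β) (hA : A.Nonempty) :
    ∃ v, #A ≤ 2 * #{a ∈ A | f a ≤ v} ∧ #A ≤ 2 * #{a ∈ A | v ≤ f a} := by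
  set T := A.filter fun a => #A ≤ 2 * #{x ∈ A | f x ≤ f a}
  have hT : T.Nonempty := by
    obtain ⟨a, ha, hmax⟩ := A.exists_max_image f hA
    refine ⟨a, mem_filter.2 ⟨ha, ?_⟩⟩
    rw [filter_true_of_mem hmax]
    omega
  obtain ⟨a, ha, hmin⟩ := T.exists_min_image f hT
  refine ⟨f a, (mem_filter.1 ha).2, ?_⟩
  have hlow : 2 * #{x ∈ A | f x < f a} < #A := by
    by_contra! hge
    have hne : ({x ∈ A | f x < f a} : Finset α).Nonempty := by
      rw [← card_pos]; have := hA.card_pos; omega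
    obtain ⟨b, hb, hbmax⟩ := exists_max_image _ f hne
    have hbT : b ∈ T := by
      refine mem_filter.2 ⟨(mem_filter.1 hb).1, hge.trans ?_⟩
      gcongr with x hx
      exact fun hxa => hbmax x (mem_filter.2 ⟨hx, hxa⟩)
    exact absurd (hmin b hbT) (not_le.2 (mem_filter.1 hb).2)
  have hsplit := card_filter_add_card_filter_not (s := A) (fun x => f x < f a)
  simp only [not_lt] at hsplit
  omega

theorem hasStrongErdosHajnal_of_isUpperSet {γ γ' : Type*} [LinearOrder γ] [LinearOrder γ']
    (f : α → γ) (g : β → γ') {S : Set (γ × γ')} (hS : IsUpperSet S) :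
    HasStrongErdosHajnal {z : α × β | (f z.1, g z.2) ∈ S} := by
  refine .of_nonempty (δ := 1 / 2) (by norm_num) (by norm_num) fun A B hA hB => ?_
  obtain ⟨v, hvA, hAv⟩ := A.exists_median f hA
  obtain ⟨w, hwB, hBw⟩ := B.exists_median g hB
  have half (k l : ℕ) (h : k ≤ 2 * l) : 1 / 2 * (k : ℝ) ≤ l := by
    have : (k : ℝ) ≤ 2 * l := by exact_mod_cast h
    linarith
  by_cases hvw : (v, w) ∈ S
  · refine ⟨{a ∈ A | v ≤ f a}, filter_subset _ _, {b ∈ B | w ≤ g b}, filter_subset _ _,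
      half _ _ hAv, half _ _ hBw, Or.inl fun a ha b hb => hS ?_ hvw⟩
    exact ⟨(mem_filter.1 ha).2, (mem_filter.1 hb).2⟩
  · refine ⟨{a ∈ A | f a ≤ v}, filter_subset _ _, {b ∈ B | g b ≤ w}, filter_subset _ _,
      half _ _ hvA, half _ _ hwB, Or.inr fun a ha b hb hab => hvw (hS ?_ hab)⟩
    exact ⟨(mem_filter.1 ha).2, (mem_filter.1 hb).2⟩

theorem Finset.exists_inv_card_mul_card_le_card_fiber [Fintype ι] [Nonempty ι] [DecidableEq ι]
    (A : Finset α) (p : α → ι) : ∃ i, (Fintype.card ι : ℝ)⁻¹ * #A ≤ #{a ∈ A | p a = i} := by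
  obtain ⟨i, -, hi⟩ := exists_le_card_fiber_of_nsmul_le_card_of_maps_to
    (fun a _ => mem_univ (p a)) univ_nonempty (b := (Fintype.card ι : ℝ)⁻¹ * #A) (by
      rw [card_univ, nsmul_eq_mul, mul_inv_cancel_left₀ (by positivity)])
  exact ⟨i, hi⟩

theorem hasStrongErdosHajnal_of_coloring [Fintype ι] [Nonempty ι] [DecidableEq ι]
    (p : α → ι) (q : β → ι) (S : Set (ι × ι)) :
    HasStrongErdosHajnal {z : α × β | (p z.1, q z.2) ∈ S} := by
  refine ⟨(Fintype.card ι : ℝ)⁻¹, by positivity, fun A B => ?_⟩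
  obtain ⟨i, hi⟩ := A.exists_inv_card_mul_card_le_card_fiber p
  obtain ⟨j, hj⟩ := B.exists_inv_card_mul_card_le_card_fiber q
  refine ⟨{a ∈ A | p a = i}, filter_subset _ _, {b ∈ B | q b = j}, filter_subset _ _, hi, hj, ?_⟩
  have hcolor {a b} (ha : a ∈ {a ∈ A | p a = i}) (hb : b ∈ {b ∈ B | q b = j}) :
      (p a, q b) = (i, j) := by
    rw [(mem_filter.1 ha).2, (mem_filter.1 hb).2]
  by_cases hij : (i, j) ∈ S
  · exact Or.inl fun a ha b hb => by simpa [hcolor ha hb] using hij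
  · exact Or.inr fun a ha b hb => by simpa [hcolor ha hb] using hij

section Presburger

variable (f : α → ℤ) (g : β → ℤ) (c : ℤ)

theorem hasStrongErdosHajnal_lt_add : HasStrongErdosHajnal {z : α × β | c < f z.1 + g z.2} :=
  hasStrongErdosHajnal_of_isUpperSet f g (S := {x | c < x.1 + x.2})
    fun _ _ hxy hx => hx.trans_le (add_le_add hxy.1 hxy.2)

theorem hasStrongErdosHajnal_add_eq : HasStrongErdosHajnal {z : α × β | f z.1 + g z.2 = c} := by
  have h : {z : α × β | f z.1 + g z.2 = c} =
      {z | c - 1 < f z.1 + g z.2} ∩ {z | c < f z.1 + g z.2}ᶜ := by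
    ext z
    simp only [Set.mem_ofPred_eq, Set.mem_inter_iff, Set.mem_compl_iff]
    omega
  rw [h]
  exact (hasStrongErdosHajnal_lt_add f g _).inter (hasStrongErdosHajnal_lt_add f g c).compl

theorem hasStrongErdosHajnal_add_modEq (d : ℕ) [NeZero d] :
    HasStrongErdosHajnal {z : α × β | f z.1 + g z.2 ≡ c [ZMOD d]} := by
  have h : {z : α × β | f z.1 + g z.2 ≡ c [ZMOD d]} =
      {z | ((f z.1 : ZMod d), (g z.2 : ZMod d)) ∈ {x : ZMod d × ZMod d | x.1 + x.2 = c}} := by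
    ext z
    simp only [Set.mem_ofPred_eq, ← ZMod.intCast_eq_intCast_iff, Int.cast_add]
  rw [h]
  exact hasStrongErdosHajnal_of_coloring (fun a => (f a : ZMod d)) (fun b => (g b : ZMod d)) _

end Presburger

/-- Strong Erdős–Hajnal for Presburger-definable relations on `ℤ^n × ℤ^m`: Boolean combinations
of linear equalities, linear inequalities, and congruences. -/
theorem stmt_13 (n m : ℕ) (R : Set ((Fin n → ℤ) × (Fin m → ℤ)))
    (hR : BoolComb
      {S | ∃ (a : Fin n ⊕ Fin m → ℤ) (a₀ : ℤ),
        S = {z | ∑ i, a i * Sum.elim z.1 z.2 i = a₀} ∨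
        S = {z | a₀ < ∑ i, a i * Sum.elim z.1 z.2 i} ∨
        ∃ d : ℤ, 1 ≤ d ∧ S = {z | ∑ i, a i * Sum.elim z.1 z.2 i ≡ a₀ [ZMOD d]}} R) :
    ∃ δ : ℝ, 0 < δ ∧
      ∀ (A : Finset (Fin n → ℤ)) (B : Finset (Fin m → ℤ)),
        ∃ A₀ ⊆ A, ∃ B₀ ⊆ B,
          δ * (A.card : ℝ) ≤ (A₀.card : ℝ) ∧ δ * (B.card : ℝ) ≤ (B₀.card : ℝ) ∧
          ((∀ a ∈ A₀, ∀ b ∈ B₀, (a, b) ∈ R) ∨ (∀ a ∈ A₀, ∀ b ∈ B₀, (a, b) ∉ R)) := by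
  refine hR.hasStrongErdosHajnal ?_
  rintro S ⟨a, a₀, rfl | rfl | ⟨d, hd, rfl⟩⟩ <;>
    simp only [Fintype.sum_sum_type, Sum.elim_inl, Sum.elim_inr]
  · exact hasStrongErdosHajnal_add_eq (fun (x : Fin n → ℤ) => ∑ i, a (.inl i) * x i)
      (fun (y : Fin m → ℤ) => ∑ j, a (.inr j) * y j) a₀
  · exact hasStrongErdosHajnal_lt_add (fun (x : Fin n → ℤ) => ∑ i, a (.inl i) * x i)
      (fun (y : Fin m → ℤ) => ∑ j, a (.inr j) * y j) a₀
  · lift d to ℕ using by omega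
    have : NeZero d := ⟨by omega⟩
    exact hasStrongErdosHajnal_add_modEq (fun (x : Fin n → ℤ) => ∑ i, a (.inl i) * x i)
      (fun (y : Fin m → ℤ) => ∑ j, a (.inr j) * y j) a₀ d
end
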